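/- arXiv:2105.06561 — 4 statements merged into one kernel-verified Lean document; each statement's English description precedes it below -/
import Mathlib

section
/- Let v be a swap-equilibrium on G, let S be a set of edges whose deletion makes v unstable (i.e., v is not a swap-equilibrium on G − S), and let A be any set of edges of G each joining two vertices occupied by agents of the same type. Then v is also not a swap-equilibrium on G − (S ∪ A). -/
/-!
Deleting an edge between two agents of the same type can only lower their utilities, since each
loses a same-type neighbour. After a swap of agents of different types, every such edge at the
new position of a swapped agent joins it to an agent of the other type, so deleting it can only
raise the post-swap utility. Hence a profitable swap on `G − S` stays profitable on
`G − S − A = G − (S ∪ A)`.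
-/

open SimpleGraph

variable {V : Type*}

/-- Utility of the agent occupying vertex `v` in graph `H` under type assignment `τ`:
the fraction of same-type agents among occupied neighbors (0 if no neighbors). -/
noncomputable def utility (H : SimpleGraph V) (τ : V → Bool) (v : V) : ℚ := by
  classical
  exact if H.neighborSet v = ∅ then 0
    else ((H.neighborSet v ∩ {w | τ w = τ v}).ncard : ℚ) / ((H.neighborSet v).ncard : ℚ)

/-- The type function after the agents on vertices `i` and `j` exchange their vertices. -/
noncomputable def swapAt (τ : V → Bool) (i j : V) : V → Bool := fun v => by
  classical
  exact if v = i then τ j else if v = j then τ i else τ v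

/-- The swap of the (distinct-type) agents on `i` and `j` strictly increases both utilities. -/
def ProfitableSwap (H : SimpleGraph V) (τ : V → Bool) (i j : V) : Prop :=
  τ i ≠ τ j ∧
  utility H τ i < utility H (swapAt τ i j) j ∧
  utility H τ j < utility H (swapAt τ i j) i

/-- Swap-equilibrium: no profitable swap exists. -/
def IsSwapEq (H : SimpleGraph V) (τ : V → Bool) : Prop :=
  ∀ i j : V, ¬ ProfitableSwap H τ i j


lemma div_le_add_div_add {a b d : ℚ} (ha : 0 ≤ a) (hab : a ≤ b) (hd : 0 ≤ d) :
    a / b ≤ (d + a) / (d + b) := by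
  rcases (ha.trans hab).eq_or_lt with hb | hb
  · rw [← hb, div_zero]
    positivity
  · rw [div_le_div_iff₀ hb (by positivity)]
    nlinarith [mul_le_mul_of_nonneg_left hab hd]

namespace Set

variable {α : Type*} {s t u : Set α}

theorem ncard_inter_div_ncard_le_of_sdiff_subset (hs : s.Finite) (hts : t ⊆ s)
    (hu : s \ t ⊆ u) : ((t ∩ u).ncard : ℚ) / t.ncard ≤ (s ∩ u).ncard / s.ncard := by
  have hsize : ((s \ t).ncard : ℚ) + t.ncard = s.ncard := by
    exact_mod_cast ncard_sdiff_add_ncard_of_subset hts hs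
  have hsame : ((s \ t).ncard : ℚ) + (t ∩ u).ncard = (s ∩ u).ncard := by
    have hdiff : (s ∩ u) \ (t ∩ u) = s \ t := by
      ext x
      constructor
      · rintro ⟨⟨hxs, hxu⟩, hx⟩
        exact ⟨hxs, fun hxt => hx ⟨hxt, hxu⟩⟩
      · intro hx
        exact ⟨⟨hx.1, hu hx⟩, fun h => hx.2 h.1⟩
    rw [← hdiff]
    exact_mod_cast ncard_sdiff_add_ncard_of_subset (inter_subset_inter_left u hts)
      (hs.inter_of_left u)
  have hle : ((t ∩ u).ncard : ℚ) ≤ t.ncard := by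
    exact_mod_cast ncard_le_ncard inter_subset_left (hs.subset hts)
  rw [← hsize, ← hsame]
  exact div_le_add_div_add (by positivity) hle (by positivity)

theorem ncard_inter_div_ncard_le_of_disjoint_sdiff (hs : s.Finite) (hts : t ⊆ s)
    (hu : Disjoint (s \ t) u) :
    ((s ∩ u).ncard : ℚ) / s.ncard ≤ (t ∩ u).ncard / t.ncard := by
  have hinter : s ∩ u = t ∩ u := by
    refine (inter_subset_inter_left u hts).antisymm' fun x ⟨hxs, hxu⟩ => ⟨?_, hxu⟩
    by_contra hxt
    exact hu.ne_of_mem ⟨hxs, hxt⟩ hxu rfl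
  rw [hinter]
  rcases (t.ncard).eq_zero_or_pos with ht | ht
  · have hzero : (t ∩ u).ncard = 0 :=
      Nat.eq_zero_of_le_zero (ht ▸ ncard_le_ncard inter_subset_left (hs.subset hts))
    simp [hzero]
  · exact div_le_div_of_nonneg_left (by positivity) (by exact_mod_cast ht)
      (by exact_mod_cast ncard_le_ncard hts hs)

end Set

lemma utility_eq_div (H : SimpleGraph V) (τ : V → Bool) (v : V) :
    utility H τ v =
      ((H.neighborSet v ∩ {w | τ w = τ v}).ncard : ℚ) / (H.neighborSet v).ncard := by
  unfold utility
  split_ifs with h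
  · simp [h]
  · rfl

section deleteEdges

variable {H : SimpleGraph V} {A : Set (Sym2 V)} {τ : V → Bool} {v : V}

lemma utility_deleteEdges_le (hv : (H.neighborSet v).Finite)
    (hA : ∀ w, H.Adj v w → s(v, w) ∈ A → τ w = τ v) :
    utility (H.deleteEdges A) τ v ≤ utility H τ v := by
  rw [utility_eq_div, utility_eq_div]
  refine Set.ncard_inter_div_ncard_le_of_sdiff_subset hv
    (neighborSet_mono (deleteEdges_le A) v) ?_
  rintro w ⟨hw, hw'⟩
  exact hA w hw (of_not_not fun hvw => hw' ((deleteEdges_adj ..).mpr ⟨hw, hvw⟩))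

lemma utility_le_utility_deleteEdges (hv : (H.neighborSet v).Finite)
    (hA : ∀ w, H.Adj v w → s(v, w) ∈ A → τ w ≠ τ v) :
    utility H τ v ≤ utility (H.deleteEdges A) τ v := by
  rw [utility_eq_div, utility_eq_div]
  refine Set.ncard_inter_div_ncard_le_of_disjoint_sdiff hv
    (neighborSet_mono (deleteEdges_le A) v) (Set.disjoint_left.mpr ?_)
  rintro w ⟨hw, hw'⟩ hτ
  exact hA w hw (of_not_not fun hvw => hw' ((deleteEdges_adj ..).mpr ⟨hw, hvw⟩)) hτ

end deleteEdges

section swapAt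

variable {τ : V → Bool} {i j w : V}

lemma swapAt_apply_right (h : i ≠ j) : swapAt τ i j j = τ i := by
  simp [swapAt, h.symm]

lemma swapAt_apply_of_ne (hi : w ≠ i) (hj : w ≠ j) : swapAt τ i j w = τ w := by
  simp [swapAt, hi, hj]

lemma swapAt_comm (h : i ≠ j) : swapAt τ i j = swapAt τ j i := by
  funext w
  by_cases hi : w = i <;> by_cases hj : w = j <;> simp_all [swapAt]

lemma swapAt_ne_swapAt_right (hij : τ i ≠ τ j) (hjw : j ≠ w) (hw : τ w = τ j) :
    swapAt τ i j w ≠ swapAt τ i j j := by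
  have hwi : w ≠ i := fun h => hij (h ▸ hw)
  rw [swapAt_apply_of_ne hwi hjw.symm, swapAt_apply_right (fun h => hij (congrArg τ h)), hw]
  exact hij.symm

end swapAt

section Monochromatic

variable {H : SimpleGraph V} {A : Set (Sym2 V)} {τ : V → Bool} {i j : V}

lemma utility_lt_utility_swapAt_deleteEdges (hfin : ∀ v, (H.neighborSet v).Finite)
    (hA : ∀ u w, s(u, w) ∈ A → τ u = τ w) (hij : τ i ≠ τ j)
    (h : utility H τ i < utility H (swapAt τ i j) j) :
    utility (H.deleteEdges A) τ i < utility (H.deleteEdges A) (swapAt τ i j) j :=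
  calc utility (H.deleteEdges A) τ i
      ≤ utility H τ i := utility_deleteEdges_le (hfin i) fun w _ hw => (hA i w hw).symm
    _ < utility H (swapAt τ i j) j := h
    _ ≤ utility (H.deleteEdges A) (swapAt τ i j) j :=
      utility_le_utility_deleteEdges (hfin j) fun w hjw hw =>
        swapAt_ne_swapAt_right hij hjw.ne (hA j w hw).symm

theorem ProfitableSwap.deleteEdges (hfin : ∀ v, (H.neighborSet v).Finite)
    (hA : ∀ u w, s(u, w) ∈ A → τ u = τ w) (h : ProfitableSwap H τ i j) :
    ProfitableSwap (H.deleteEdges A) τ i j := by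
  obtain ⟨hij, hi, hj⟩ := h
  refine ⟨hij, utility_lt_utility_swapAt_deleteEdges hfin hA hij hi, ?_⟩
  rw [swapAt_comm fun h => hij (congrArg τ h)] at hj ⊢
  exact utility_lt_utility_swapAt_deleteEdges hfin hA hij.symm hj

end Monochromatic

theorem not_swapEq_deleteEdges_union_general [Fintype V] (G : SimpleGraph V) (τ : V → Bool)
    (S A : Set (Sym2 V))
    (hunstable : ¬ IsSwapEq (G.deleteEdges S) τ)
    (hA : ∀ u w : V, s(u, w) ∈ A → s(u, w) ∈ G.edgeSet ∧ τ u = τ w) :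
    ¬ IsSwapEq (G.deleteEdges (S ∪ A)) τ := by
  obtain ⟨i, j, hswap⟩ : ∃ i j, ProfitableSwap (G.deleteEdges S) τ i j := by
    simpa [IsSwapEq] using hunstable
  rw [← deleteEdges_deleteEdges]
  exact fun hstable => hstable i j
    (hswap.deleteEdges (fun _ => Set.toFinite _) fun u w huw => (hA u w huw).2)

/-- If deleting the edges in `S` makes the swap-equilibrium `τ` unstable, then additionally
deleting any set `A` of edges of `G` joining two vertices occupied by agents of the same
type keeps it unstable. -/
theorem not_swapEq_deleteEdges_union [Fintype V] (G : SimpleGraph V) (τ : V → Bool)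
    (S A : Set (Sym2 V))
    (heq : IsSwapEq G τ)
    (hunstable : ¬ IsSwapEq (G.deleteEdges S) τ)
    (hA : ∀ u w : V, s(u, w) ∈ A → s(u, w) ∈ G.edgeSet ∧ τ u = τ w) :
    ¬ IsSwapEq (G.deleteEdges (S ∪ A)) τ :=
  not_swapEq_deleteEdges_union_general G τ S A hunstable hA
end

section
/- In a Schelling game on a complete graph (clique) G with |T1| ≥ 2 and |T2| ≥ 2, every swap-equilibrium has edge-robustness zero: for every assignment v there exists a single edge e of G such that v is not a swap-equilibrium on G − {e}. -/
/-!
Delete the edge between two agents `a`, `a'` of the same type and let `b` be of the other type.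
Afterwards `a` sees everybody except `a`, `a'`, and `b` sees everybody except itself. With `p`, `q`
agents of the two types and `n = p + q`, the agent on `a` goes from `(p - 2) / (n - 2)` to
`(p - 1) / (n - 1)` by swapping, a gain since `p < n`, and the agent on `b` goes from
`(q - 1) / (n - 1)` to `(q - 1) / (n - 2)`, a gain since `q ≥ 2`.
-/

open SimpleGraph

variable {V : Type*}

-- `Set.ncard` is `0` on infinite sets, so positive counts of both types force finiteness.
lemma finite_of_ncard_fibers_pos (τ : V → Bool) (ht : 0 < {v | τ v = true}.ncard)
    (hf : 0 < {v | τ v = false}.ncard) : Finite V := by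
  have huniv : (Set.univ : Set V) = {v | τ v = true} ∪ {v | τ v = false} := by
    ext v
    cases τ v <;> simp
  rw [← Set.finite_univ_iff, huniv]
  exact (Set.finite_of_ncard_pos ht).union (Set.finite_of_ncard_pos hf)

lemma setOf_eq_compl_setOf_eq {τ : V → Bool} {a b : V} (hba : τ b ≠ τ a) :
    {w | τ w = τ b} = {w | τ w = τ a}ᶜ := by
  ext w
  simp only [Set.mem_ofPred_eq, Set.mem_compl_iff]
  revert hba
  cases τ w <;> cases τ a <;> cases τ b <;> decide

lemma neighborSet_top_deleteEdges_left (a a' : V) :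
    ((⊤ : SimpleGraph V).deleteEdges {s(a, a')}).neighborSet a = {a, a'}ᶜ := by
  ext w
  simp only [mem_neighborSet, deleteEdges_adj, top_adj, Set.mem_singleton_iff, Sym2.eq_iff,
    Set.mem_compl_iff, Set.mem_insert_iff]
  grind

lemma neighborSet_top_deleteEdges_of_ne {a a' c : V} (ha : c ≠ a) (ha' : c ≠ a') :
    ((⊤ : SimpleGraph V).deleteEdges {s(a, a')}).neighborSet c = {c}ᶜ := by
  ext w
  simp only [mem_neighborSet, deleteEdges_adj, top_adj, Set.mem_singleton_iff, Sym2.eq_iff,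
    Set.mem_compl_iff]
  grind

lemma setOf_swapAt_sdiff_right {τ : V → Bool} {i j : V} (h : τ j ≠ τ i) :
    {w | swapAt τ i j w = swapAt τ i j j} \ {j} = {w | τ w = τ i} \ {i} := by
  ext w
  simp only [swapAt, Set.mem_sdiff, Set.mem_ofPred_eq, Set.mem_singleton_iff]
  grind

lemma setOf_swapAt_sdiff_pair_left {τ : V → Bool} {i i' j : V} (hi' : τ i' = τ i)
    (h : τ j ≠ τ i) :
    {w | swapAt τ i j w = swapAt τ i j i} \ {i, i'} = {w | τ w = τ j} \ {j} := by
  ext w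
  simp only [swapAt, Set.mem_sdiff, Set.mem_ofPred_eq, Set.mem_insert_iff, Set.mem_singleton_iff]
  grind

lemma utility_of_neighborSet_eq_compl {H : SimpleGraph V} (τ : V → Bool) {v : V} {s : Set V}
    (hN : H.neighborSet v = sᶜ) (hs : sᶜ.Nonempty) :
    utility H τ v = (({w | τ w = τ v} \ s).ncard : ℚ) / sᶜ.ncard := by
  rw [utility, hN, if_neg hs.ne_empty, Set.sdiff_eq_compl_inter]

lemma div_lt_succ_div_succ (k m : ℕ) :
    (k : ℚ) / (k + m + 1) < (k + 1) / (k + m + 2) := by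
  rw [div_lt_div_iff₀ (by positivity) (by positivity)]
  nlinarith

theorem profitableSwap_of_neighborSet_eq [Finite V] {H : SimpleGraph V} {τ : V → Bool}
    {a a' b : V} (haa' : a ≠ a') (ha' : τ a' = τ a) (hba : τ b ≠ τ a)
    (hD : 2 ≤ {w | τ w = τ b}.ncard)
    (hNa : H.neighborSet a = {a, a'}ᶜ) (hNb : H.neighborSet b = {b}ᶜ) :
    ProfitableSwap H τ a b := by
  have hb_a : b ≠ a := by rintro rfl; exact hba rfl
  have hb_a' : b ≠ a' := by rintro rfl; exact hba ha'
  have hSD : {w | τ w = τ a}.ncard + {w | τ w = τ b}.ncard = Nat.card V := by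
    rw [setOf_eq_compl_setOf_eq hba]
    exact Set.ncard_add_ncard_compl _
  have hNa_card : ({a, a'}ᶜ : Set V).ncard + 2 = Nat.card V := by
    rw [← Set.ncard_pair haa', Set.ncard_compl_add_ncard]
  have hNb_card : ({b}ᶜ : Set V).ncard + 1 = Nat.card V := by
    rw [← Set.ncard_singleton b, Set.ncard_compl_add_ncard]
  have hS2 : ({w | τ w = τ a} \ {a, a'}).ncard + 2 = {w | τ w = τ a}.ncard := by
    rw [← Set.ncard_pair haa']
    exact Set.ncard_sdiff_add_ncard_of_subset (by simp [Set.insert_subset_iff, ha'])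
  have hS1 : ({w | τ w = τ a} \ {a}).ncard + 1 = {w | τ w = τ a}.ncard :=
    Set.ncard_sdiff_singleton_add_one rfl
  have hD1 : ({w | τ w = τ b} \ {b}).ncard + 1 = {w | τ w = τ b}.ncard :=
    Set.ncard_sdiff_singleton_add_one rfl
  obtain ⟨k, hk⟩ : ∃ k, ({w | τ w = τ a} \ {a, a'}).ncard = k := ⟨_, rfl⟩
  obtain ⟨m, hm⟩ : ∃ m, ({w | τ w = τ b} \ {b}).ncard = m := ⟨_, rfl⟩
  have hS1' : ({w | τ w = τ a} \ {a}).ncard = k + 1 := by omega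
  have hNa' : ({a, a'}ᶜ : Set V).ncard = k + m + 1 := by omega
  have hNb' : ({b}ᶜ : Set V).ncard = k + m + 2 := by omega
  have uA (σ : V → Bool) := utility_of_neighborSet_eq_compl σ hNa ⟨b, by simp [hb_a, hb_a']⟩
  have uB (σ : V → Bool) := utility_of_neighborSet_eq_compl σ hNb ⟨a, by simp [hb_a.symm]⟩
  refine ⟨hba.symm, ?_, ?_⟩
  · rw [uA, uB, setOf_swapAt_sdiff_right hba, hk, hS1', hNa', hNb']
    push_cast
    exact div_lt_succ_div_succ k m
  · rw [uA, uB, setOf_swapAt_sdiff_pair_left ha' hba, hm, hNa', hNb']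
    push_cast
    exact div_lt_div_of_pos_left (by norm_cast; omega) (by positivity) (by linarith)

theorem clique_edge_robustness_zero_general (τ : V → Bool)
    (h1 : 2 ≤ {v : V | τ v = true}.ncard)
    (h2 : 2 ≤ {v : V | τ v = false}.ncard) :
    ∃ e ∈ (⊤ : SimpleGraph V).edgeSet,
      ¬ IsSwapEq ((⊤ : SimpleGraph V).deleteEdges {e}) τ := by
  have : Finite V := finite_of_ncard_fibers_pos τ (by omega) (by omega)
  obtain ⟨a, a', ha, ha', haa'⟩ := (Set.one_lt_ncard_iff).mp h1
  obtain ⟨b, hb⟩ := Set.nonempty_of_ncard_ne_zero (by omega : {v : V | τ v = false}.ncard ≠ 0)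
  simp only [Set.mem_ofPred_eq] at ha ha' hb
  have hba : τ b ≠ τ a := by simp [ha, hb]
  refine ⟨s(a, a'), by simpa using haa', fun hEq => hEq a b ?_⟩
  refine profitableSwap_of_neighborSet_eq haa' (ha'.trans ha.symm) hba (by rwa [hb])
    (neighborSet_top_deleteEdges_left a a') (neighborSet_top_deleteEdges_of_ne ?_ ?_)
  · rintro rfl; exact hba rfl
  · rintro rfl; exact hba (ha'.trans ha.symm)

/-- On a clique with at least two agents of each type, every assignment (in particular
every swap-equilibrium) has edge-robustness zero: some single edge deletion makes it
unstable. -/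
theorem clique_edge_robustness_zero [Fintype V] (τ : V → Bool)
    (h1 : 2 ≤ {v : V | τ v = true}.ncard)
    (h2 : 2 ≤ {v : V | τ v = false}.ncard) :
    ∃ e ∈ (⊤ : SimpleGraph V).edgeSet,
      ¬ IsSwapEq ((⊤ : SimpleGraph V).deleteEdges {e}) τ :=
  clique_edge_robustness_zero_general τ h1 h2
end

section
/- Let G be an α-star-constellation graph and v an assignment in a Schelling game on G such that: (a) some degree-one vertex is occupied by an agent whose unique neighbor is occupied by an agent of the other type, and (b) for each type there exist two distinct agents of that type each adjacent to an agent of the other type (i.e., neither of the conditions of the equilibrium characterization holds). Then v is not a swap-equilibrium. -/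
open SimpleGraph

variable {V : Type*}

/-- Degree of a vertex (number of neighbors). -/
noncomputable def ndeg (H : SimpleGraph V) (v : V) : ℕ := (H.neighborSet v).ncard

/-- `G` is an `α`-star-constellation graph: connected, and every vertex of degree `> 1`
has at least `α` more degree-one neighbors than neighbors of degree `> 1`. -/
def IsStarConstellation (G : SimpleGraph V) (α : ℕ) : Prop :=
  G.Connected ∧ ∀ v : V, 1 < ndeg G v →
    {w ∈ G.neighborSet v | 1 < ndeg G w}.ncard + α ≤
      {w ∈ G.neighborSet v | ndeg G w = 1}.ncard

/- Swap the agent on a leaf `v`, whose neighbour `w` has the other type, with an agent `x ≠ w` of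
`w`'s type that has a neighbour `y` of `v`'s type. At `v` the newcomer sees only `w`, a friend, so
it gains utility `1`, while before it saw the enemy `y`. At `x` the agent from `v` sees the friend
`y` (`y ≠ v`, since `v`'s only neighbour is `w ≠ x`), while at `v` it saw only the enemy `w`. -/

section SwapAt

variable (τ : V → Bool) {i j v : V}

@[simp]
lemma swapAt_left : swapAt τ i j i = τ j := by
  simp [swapAt]

@[simp]
lemma swapAt_right (hij : i ≠ j) : swapAt τ i j j = τ i := by
  simp [swapAt, hij.symm]

lemma swapAt_of_ne (hi : v ≠ i) (hj : v ≠ j) : swapAt τ i j v = τ v := by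
  simp [swapAt, hi, hj]

end SwapAt

section Utility

variable {G : SimpleGraph V} {τ : V → Bool} {v w y : V}

lemma neighborSet_eq_singleton_of_ndeg_eq_one (hv : ndeg G v = 1) (hvw : G.Adj v w) :
    G.neighborSet v = {w} := by
  obtain ⟨u, hu⟩ := Set.ncard_eq_one.mp hv
  have hw : w ∈ G.neighborSet v := hvw
  rw [hu, Set.mem_singleton_iff] at hw
  rw [hu, hw]

lemma utility_of_neighborSet_eq_singleton (hv : G.neighborSet v = {w}) :
    utility G τ v = if τ w = τ v then 1 else 0 := by
  classical
  unfold utility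
  rw [if_neg (by simp [hv]), hv]
  split_ifs with h
  · rw [Set.inter_eq_left.mpr ((Set.singleton_subset_iff (s := {u | τ u = τ v})).mpr h)]
    simp
  · rw [(Set.singleton_inter_eq_empty (s := {u | τ u = τ v})).mpr h]
    simp

lemma utility_pos (hfin : (G.neighborSet v).Finite) (hvy : G.Adj v y) (hy : τ y = τ v) :
    0 < utility G τ v := by
  classical
  have hy_mem : y ∈ G.neighborSet v := hvy
  unfold utility
  rw [if_neg (Set.nonempty_iff_ne_empty.mp ⟨y, hy_mem⟩)]
  apply div_pos
  · exact_mod_cast (Set.ncard_pos (hfin.subset Set.inter_subset_left)).mpr ⟨y, hy_mem, hy⟩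
  · exact_mod_cast (Set.ncard_pos hfin).mpr ⟨y, hy_mem⟩

lemma utility_lt_one (hfin : (G.neighborSet v).Finite) (hvy : G.Adj v y) (hy : τ y ≠ τ v) :
    utility G τ v < 1 := by
  classical
  have hy_mem : y ∈ G.neighborSet v := hvy
  unfold utility
  rw [if_neg (Set.nonempty_iff_ne_empty.mp ⟨y, hy_mem⟩),
    div_lt_one (by exact_mod_cast (Set.ncard_pos hfin).mpr ⟨y, hy_mem⟩)]
  have hssub : G.neighborSet v ∩ {u | τ u = τ v} ⊂ G.neighborSet v :=
    Set.ssubset_iff_subset_ne.mpr ⟨Set.inter_subset_left, fun h => hy (h ▸ hy_mem).2⟩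
  exact_mod_cast Set.ncard_lt_ncard hssub hfin

end Utility

lemma profitableSwap_of_leaf {G : SimpleGraph V} {τ : V → Bool} {v w x y : V}
    (hv : ndeg G v = 1) (hvw : G.Adj v w) (hτw : τ w ≠ τ v)
    (hxw : x ≠ w) (hτx : τ x = τ w) (hxy : G.Adj x y) (hτy : τ y ≠ τ w)
    (hfin : (G.neighborSet x).Finite) :
    ProfitableSwap G τ v x := by
  have hNv := neighborSet_eq_singleton_of_ndeg_eq_one hv hvw
  have hxv : x ≠ v := fun h => hτw (h ▸ hτx).symm
  have hyv : y ≠ v := by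
    rintro rfl
    exact hxw (hNv ▸ hxy.symm : x ∈ ({w} : Set V))
  have hyx : y ≠ x := fun h => hτy (h ▸ hτx)
  have hτyv : τ y = τ v := (Bool.eq_not_iff.mpr hτy).trans (Bool.eq_not_iff.mpr hτw.symm).symm
  refine ⟨fun h => hτw (hτx ▸ h.symm), ?_, ?_⟩
  · calc utility G τ v = 0 := by
          rw [utility_of_neighborSet_eq_singleton hNv, if_neg hτw]
      _ < utility G (swapAt τ v x) x :=
          utility_pos hfin hxy (by rw [swapAt_of_ne τ hyv hyx, swapAt_right τ hxv.symm, hτyv])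
  · calc utility G τ x < 1 := utility_lt_one hfin hxy (hτx ▸ hτy)
      _ = utility G (swapAt τ v x) v := by
          rw [utility_of_neighborSet_eq_singleton hNv, if_pos]
          rw [swapAt_of_ne τ hvw.ne.symm hxw.symm, swapAt_left, hτx]

theorem starConstellation_not_swapEq_general [Fintype V] (G : SimpleGraph V)
    (τ : V → Bool)
    (ha : ∃ v w : V, ndeg G v = 1 ∧ G.Adj v w ∧ τ w ≠ τ v)
    (hb : ∀ b : Bool, ∃ x x' : V, x ≠ x' ∧ τ x = b ∧ τ x' = b ∧
      (∃ y : V, G.Adj x y ∧ τ y ≠ b) ∧ (∃ y' : V, G.Adj x' y' ∧ τ y' ≠ b)) :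
    ¬ IsSwapEq G τ := by
  obtain ⟨v, w, hv, hvw, hτw⟩ := ha
  obtain ⟨x, y, hxw, hτx, hxy, hτy⟩ : ∃ x y, x ≠ w ∧ τ x = τ w ∧ G.Adj x y ∧ τ y ≠ τ w := by
    obtain ⟨x₁, x₂, hx₁₂, hτx₁, hτx₂, ⟨y₁, hxy₁, hτy₁⟩, ⟨y₂, hxy₂, hτy₂⟩⟩ := hb (τ w)
    by_cases h : x₁ = w
    · exact ⟨x₂, y₂, fun h₂ => hx₁₂ (h.trans h₂.symm), hτx₂, hxy₂, hτy₂⟩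
    · exact ⟨x₁, y₁, h, hτx₁, hxy₁, hτy₁⟩
  exact fun hEq => hEq v x (profitableSwap_of_leaf hv hvw hτw hxw hτx hxy hτy (Set.toFinite _))

/-- On an `α`-star-constellation graph, if (a) some degree-one vertex is occupied by an
agent whose unique neighbor is occupied by an agent of the other type, and (b) for each
type there are two distinct agents of that type each adjacent to an agent of the other
type, then the assignment is not a swap-equilibrium. -/
theorem starConstellation_not_swapEq [Fintype V] (G : SimpleGraph V) (α : ℕ)
    (τ : V → Bool) (hG : IsStarConstellation G α)
    (ha : ∃ v w : V, ndeg G v = 1 ∧ G.Adj v w ∧ τ w ≠ τ v)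
    (hb : ∀ b : Bool, ∃ x x' : V, x ≠ x' ∧ τ x = b ∧ τ x' = b ∧
      (∃ y : V, G.Adj x y ∧ τ y ≠ b) ∧ (∃ y' : V, G.Adj x' y' ∧ τ y' ≠ b)) :
    ¬ IsSwapEq G τ :=
  starConstellation_not_swapEq_general G τ ha hb
end

section
/- In a Schelling game with |T1| = |T2| on an (x × y)-grid with even x ≥ 4 and y ≥ 2, the assignment in which agents of T1 occupy the first x/2 columns and agents of T2 occupy the remaining columns is a swap-equilibrium, and it remains a swap-equilibrium after deleting any single edge (it is 1-edge-robust). -/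
open SimpleGraph

variable {V : Type*}

/-- The `(x × y)`-grid graph: vertices `(a, b)` with `a < x`, `b < y`, adjacent iff at
`L1`-distance one. -/
def gridGraph (x y : ℕ) : SimpleGraph (Fin x × Fin y) where
  Adj u v := (u.1 = v.1 ∧ ((u.2 : ℕ) + 1 = (v.2 : ℕ) ∨ (v.2 : ℕ) + 1 = (u.2 : ℕ))) ∨
    (u.2 = v.2 ∧ ((u.1 : ℕ) + 1 = (v.1 : ℕ) ∨ (v.1 : ℕ) + 1 = (u.1 : ℕ)))
  symm := by
    constructor
    intro u v h
    rcases h with ⟨h1, h2⟩ | ⟨h1, h2⟩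
    · exact Or.inl ⟨h1.symm, h2.symm⟩
    · exact Or.inr ⟨h1.symm, h2.symm⟩
  loopless := by constructor; intro u h; rcases h with ⟨_, h⟩ | ⟨_, h⟩ <;> omega

/-!
Only the agent across the middle of its row can have the other type among the neighbours of an
agent, and a vertex next to the middle has at least three neighbours. So even after deleting one
edge every agent keeps utility at least `1/2`, while an agent moved across the middle by a swap
finds at most one agent of its type among at least two neighbours, i.e. utility at most `1/2`.
Hence no agent strictly gains from a swap.
-/

section Schelling

variable {H : SimpleGraph V} {τ : V → Bool} {v : V}

def otherTypeNeighborSet (H : SimpleGraph V) (τ : V → Bool) (v : V) : Set V :=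
  H.neighborSet v \ {w | τ w = τ v}

lemma otherTypeNeighborSet_mono {G : SimpleGraph V} (hle : H ≤ G) :
    otherTypeNeighborSet H τ v ⊆ otherTypeNeighborSet G τ v :=
  Set.sdiff_subset_sdiff_left fun _ hw => hle hw

lemma half_le_utility (hpos : 0 < (H.neighborSet v).ncard)
    (hother : 2 * (otherTypeNeighborSet H τ v).ncard ≤ (H.neighborSet v).ncard) :
    1 / 2 ≤ utility H τ v := by
  have hne : H.neighborSet v ≠ ∅ := (Set.nonempty_of_ncard_ne_zero hpos.ne').ne_empty
  have hsplit := Set.ncard_inter_add_ncard_sdiff_eq_ncard (H.neighborSet v) {w | τ w = τ v}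
    (Set.finite_of_ncard_pos hpos)
  rw [otherTypeNeighborSet] at hother
  rw [utility, if_neg hne, div_le_div_iff₀ two_pos (by exact_mod_cast hpos)]
  norm_cast
  omega

lemma utility_le_half
    (hsame : 2 * (H.neighborSet v ∩ {w | τ w = τ v}).ncard ≤ (H.neighborSet v).ncard) :
    utility H τ v ≤ 1 / 2 := by
  rw [utility]
  split_ifs
  · norm_num
  · rcases Nat.eq_zero_or_pos (H.neighborSet v).ncard with hzero | hpos
    · simp [hzero]
    · rw [div_le_div_iff₀ (by exact_mod_cast hpos) two_pos]
      norm_cast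
      omega

lemma neighborSet_inter_swapAt_subset {i j : V} (hij : τ i ≠ τ j) :
    H.neighborSet j ∩ {w | swapAt τ i j w = swapAt τ i j j} ⊆ otherTypeNeighborSet H τ j := by
  rintro w ⟨hadj, hw⟩
  have hji : j ≠ i := fun h => hij (h ▸ rfl)
  have hwj : w ≠ j := (H.ne_of_adj hadj).symm
  by_cases hwi : w = i
  · subst hwi
    simp only [swapAt, hji, ↓reduceIte, Set.mem_ofPred_eq] at hw
    exact absurd hw.symm hij
  · simp only [swapAt, hji, hwi, hwj, ↓reduceIte, Set.mem_ofPred_eq] at hw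
    exact ⟨hadj, fun h => hij (hw.symm.trans h)⟩

lemma two_mul_ncard_otherTypeNeighborSet_le
    (hsub : (otherTypeNeighborSet H τ v).Subsingleton)
    (hdeg : (otherTypeNeighborSet H τ v).Nonempty → 2 ≤ (H.neighborSet v).ncard) :
    2 * (otherTypeNeighborSet H τ v).ncard ≤ (H.neighborSet v).ncard := by
  rcases (otherTypeNeighborSet H τ v).eq_empty_or_nonempty with hempty | hne
  · simp [hempty]
  · have := (Set.ncard_le_one hsub.finite).2 hsub
    have := hdeg hne
    omega

theorem isSwapEq_of_subsingleton_otherTypeNeighborSet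
    (hpos : ∀ v, 0 < (H.neighborSet v).ncard)
    (hsub : ∀ v, (otherTypeNeighborSet H τ v).Subsingleton)
    (hdeg : ∀ v, (otherTypeNeighborSet H τ v).Nonempty → 2 ≤ (H.neighborSet v).ncard) :
    IsSwapEq H τ := by
  rintro i j ⟨hij, hgain, -⟩
  have hbound v := two_mul_ncard_otherTypeNeighborSet_le (hsub v) (hdeg v)
  have hi : 1 / 2 ≤ utility H τ i := half_le_utility (hpos i) (hbound i)
  have hj : utility H (swapAt τ i j) j ≤ 1 / 2 :=
    utility_le_half <| (Nat.mul_le_mul_left 2 <| Set.ncard_le_ncard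
      (neighborSet_inter_swapAt_subset hij) (hsub j).finite).trans (hbound j)
  linarith

end Schelling

lemma ncard_neighborSet_le_deleteEdges_singleton_add_one [Finite V] (G : SimpleGraph V)
    (e : Sym2 V) (v : V) :
    (G.neighborSet v).ncard ≤ ((G.deleteEdges {e}).neighborSet v).ncard + 1 := by
  have hdel : G.neighborSet v \ (G.deleteEdges {e}).neighborSet v ⊆ {w | s(v, w) = e} := by
    intro w ⟨hadj, hw⟩
    by_contra hne
    exact hw ((G.deleteEdges_adj).2 ⟨hadj, hne⟩)
  have hsub : {w | s(v, w) = e}.Subsingleton := fun w hw w' hw' =>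
    Sym2.congr_right.1 (hw.trans hw'.symm)
  calc (G.neighborSet v).ncard
      ≤ (G.neighborSet v \ (G.deleteEdges {e}).neighborSet v).ncard
        + ((G.deleteEdges {e}).neighborSet v).ncard := Set.ncard_le_ncard_sdiff_add_ncard _ _
    _ ≤ 1 + ((G.deleteEdges {e}).neighborSet v).ncard := by
        gcongr
        exact (Set.ncard_le_ncard hdel hsub.finite).trans ((Set.ncard_le_one hsub.finite).2 hsub)
    _ = _ := add_comm _ _

section Grid

variable {x y : ℕ}

def leftHalf (x y : ℕ) (v : Fin x × Fin y) : Bool := decide ((v.1 : ℕ) < x / 2)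

lemma gridGraph_adj_of_leftHalf_ne {v w : Fin x × Fin y} (hadj : (gridGraph x y).Adj v w)
    (hne : leftHalf x y w ≠ leftHalf x y v) :
    w.2 = v.2 ∧ ((v.1 : ℕ) + 1 = x / 2 ∧ (w.1 : ℕ) = x / 2 ∨
      (v.1 : ℕ) = x / 2 ∧ (w.1 : ℕ) + 1 = x / 2) := by
  rcases hadj with ⟨hcol, -⟩ | ⟨hrow, hstep⟩
  · exact absurd (by rw [leftHalf, leftHalf, hcol]) hne
  · refine ⟨hrow.symm, ?_⟩
    simp only [leftHalf, ne_eq, decide_eq_decide] at hne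
    omega

lemma otherTypeNeighborSet_gridGraph_subsingleton (v : Fin x × Fin y) :
    (otherTypeNeighborSet (gridGraph x y) (leftHalf x y) v).Subsingleton := by
  rintro w ⟨hw, hwt⟩ w' ⟨hw', hwt'⟩
  obtain ⟨hrow, hcol⟩ := gridGraph_adj_of_leftHalf_ne hw hwt
  obtain ⟨hrow', hcol'⟩ := gridGraph_adj_of_leftHalf_ne hw' hwt'
  exact Prod.ext (Fin.ext (by omega)) (hrow.trans hrow'.symm)

lemma exists_gridGraph_adj_fst_eq (hy : 2 ≤ y) (v : Fin x × Fin y) :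
    ∃ w, (gridGraph x y).Adj v w ∧ w.1 = v.1 := by
  by_cases h : (v.2 : ℕ) + 1 < y
  · exact ⟨(v.1, ⟨v.2 + 1, h⟩), Or.inl ⟨rfl, Or.inl rfl⟩, rfl⟩
  · exact ⟨(v.1, ⟨v.2 - 1, by omega⟩), Or.inl ⟨rfl, Or.inr (by simp only; omega)⟩, rfl⟩

lemma exists_gridGraph_adj_snd_eq (hx : 2 ≤ x) (v : Fin x × Fin y) :
    ∃ w, (gridGraph x y).Adj v w ∧ w.2 = v.2 := by
  by_cases h : (v.1 : ℕ) + 1 < x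
  · exact ⟨(⟨v.1 + 1, h⟩, v.2), Or.inr ⟨rfl, Or.inl rfl⟩, rfl⟩
  · exact ⟨(⟨v.1 - 1, by omega⟩, v.2), Or.inr ⟨rfl, Or.inr (by simp only; omega)⟩, rfl⟩

lemma two_le_ncard_neighborSet_gridGraph (hx : 2 ≤ x) (hy : 2 ≤ y) (v : Fin x × Fin y) :
    2 ≤ ((gridGraph x y).neighborSet v).ncard := by
  obtain ⟨a, ha, ha1⟩ := exists_gridGraph_adj_fst_eq hy v
  obtain ⟨b, hb, hb2⟩ := exists_gridGraph_adj_snd_eq hx v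
  refine (Set.one_lt_ncard_iff).2 ⟨a, b, ha, hb, ?_⟩
  rintro rfl
  exact (gridGraph x y).ne_of_adj ha (Prod.ext ha1.symm hb2.symm)

lemma three_le_ncard_neighborSet_gridGraph (hy : 2 ≤ y) (v : Fin x × Fin y)
    (hleft : 1 ≤ (v.1 : ℕ)) (hright : (v.1 : ℕ) + 1 < x) :
    3 ≤ ((gridGraph x y).neighborSet v).ncard := by
  obtain ⟨c, hc, hc1⟩ := exists_gridGraph_adj_fst_eq hy v
  have hne {a b : Fin x × Fin y} (h : (a.1 : ℕ) ≠ b.1) : a ≠ b := fun hab => h (hab ▸ rfl)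
  refine (Set.two_lt_ncard_iff).2 ⟨(⟨v.1 - 1, by omega⟩, v.2), (⟨v.1 + 1, hright⟩, v.2), c,
    Or.inr ⟨rfl, Or.inr (by simp only; omega)⟩, Or.inr ⟨rfl, Or.inl rfl⟩, hc,
    hne (by simp only; omega), hne (by simp only [hc1]; omega), hne (by simp only [hc1]; omega)⟩

theorem isSwapEq_leftHalf_of_le_gridGraph (hx : 4 ≤ x) (hy : 2 ≤ y)
    {H : SimpleGraph (Fin x × Fin y)} (hle : H ≤ gridGraph x y)
    (hdeg : ∀ v, ((gridGraph x y).neighborSet v).ncard ≤ (H.neighborSet v).ncard + 1) :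
    IsSwapEq H (leftHalf x y) := by
  refine isSwapEq_of_subsingleton_otherTypeNeighborSet (fun v => ?_)
    (fun v => (otherTypeNeighborSet_gridGraph_subsingleton v).anti (otherTypeNeighborSet_mono hle))
    (fun v ⟨w, hw⟩ => ?_)
  · have := two_le_ncard_neighborSet_gridGraph (by omega) hy v
    have := hdeg v
    omega
  · obtain ⟨-, hcol⟩ := gridGraph_adj_of_leftHalf_ne (hle hw.1) hw.2
    have := three_le_ncard_neighborSet_gridGraph hy v (by omega) (by omega)
    have := hdeg v
    omega

end Grid

theorem grid_half_columns_one_edge_robust_general (x y : ℕ) (hx : 4 ≤ x)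
    (hy : 2 ≤ y) (τ : Fin x × Fin y → Bool)
    (hτ : ∀ v : Fin x × Fin y, τ v = decide ((v.1 : ℕ) < x / 2)) :
    IsSwapEq (gridGraph x y) τ ∧
    ∀ e : Sym2 (Fin x × Fin y), IsSwapEq ((gridGraph x y).deleteEdges {e}) τ := by
  obtain rfl : τ = leftHalf x y := funext hτ
  exact ⟨isSwapEq_leftHalf_of_le_gridGraph hx hy le_rfl fun _ => Nat.le_succ _,
    fun e => isSwapEq_leftHalf_of_le_gridGraph hx hy (deleteEdges_le _)
      (ncard_neighborSet_le_deleteEdges_singleton_add_one _ e)⟩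

/-- On an `(x × y)`-grid with even `x ≥ 4` and `y ≥ 2`, the assignment in which the agents
of `T1` occupy the first `x/2` columns and the agents of `T2` the remaining columns is a
swap-equilibrium and remains one after deleting any single edge (it is 1-edge-robust). -/
theorem grid_half_columns_one_edge_robust (x y : ℕ) (hx : 4 ≤ x) (hxe : Even x)
    (hy : 2 ≤ y) (τ : Fin x × Fin y → Bool)
    (hτ : ∀ v : Fin x × Fin y, τ v = decide ((v.1 : ℕ) < x / 2)) :
    IsSwapEq (gridGraph x y) τ ∧
    ∀ e : Sym2 (Fin x × Fin y), IsSwapEq ((gridGraph x y).deleteEdges {e}) τ :=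
  grid_half_columns_one_edge_robust_general x y hx hy τ hτ
end
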